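/- arXiv:1110.2277 — 4 statements merged into one kernel-verified Lean document; each statement's English description precedes it below -/
import Mathlib

section
/- Let R be a commutative ring and M an artinian R-module. Then the set F of maximal ideals m of R for which there exists an injective R-homomorphism R/m → M is finite; moreover, writing J for the intersection of the members of F (with J = R if F is empty), every element x ∈ M is annihilated by some power of J, i.e., for each x ∈ M there exists n ∈ ℕ with J^n · x = 0. -/
/-!
Distinct maximal ideals are comaximal, so the `m`-torsion submodules of `M` are independent; in an
artinian module only finitely many of them are nonzero, and `R ⧸ m` embeds in `M` exactly when the
`m`-torsion is nonzero. For `x : M` the ring `R ⧸ ann x ≅ R ∙ x` is artinian, so its Jacobson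
radical is nilpotent, and each maximal `m ⊇ ann x` is an associated prime of it, which produces a
nonzero element of `R ∙ x` killed by `m`. Hence `J ≤ jacobson (ann x)` and some `J ^ n` kills `x`.
-/

open LinearMap Submodule

variable {R : Type*} [CommRing R]

theorem IsArtinianRing.exists_ne_zero_forall_mul_eq_zero [IsArtinianRing R] (p : Ideal R)
    [p.IsPrime] : ∃ a : R, a ≠ 0 ∧ ∀ r ∈ p, r * a = 0 := by
  have hp : p ∈ (Module.annihilator R R).minimalPrimes :=
    IsArtinianRing.mem_minimalPrimes (by simp [Module.annihilator_eq_bot.mpr inferInstance])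
  obtain ⟨-, a, rfl⟩ := isAssociatedPrime_iff.mp
    (Module.associatedPrimes.minimalPrimes_annihilator_subset_associatedPrimes R R hp)
  refine ⟨a, ?_, fun r hr => mem_colon_singleton.mp hr⟩
  rintro rfl
  exact Ideal.IsPrime.ne_top ‹_› (by simp)

namespace Ideal

variable {I : Ideal R} [IsArtinianRing (R ⧸ I)]

theorem exists_notMem_forall_mul_mem_of_isArtinianRing_quotient {p : Ideal R} [p.IsPrime]
    (hIp : I ≤ p) : ∃ b ∉ I, ∀ r ∈ p, r * b ∈ I := by
  have : (p.map (Quotient.mk I)).IsPrime := map_isPrime_of_surjective Quotient.mk_surjective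
    (by rwa [mk_ker])
  obtain ⟨a, ha, hpa⟩ := IsArtinianRing.exists_ne_zero_forall_mul_eq_zero (p.map (Quotient.mk I))
  obtain ⟨b, rfl⟩ := Quotient.mk_surjective a
  refine ⟨b, fun hb => ha (Quotient.eq_zero_iff_mem.mpr hb), fun r hr => ?_⟩
  rw [← Quotient.eq_zero_iff_mem, map_mul]
  exact hpa _ (mem_map_of_mem _ hr)

variable (I) in
theorem exists_jacobson_pow_le_of_isArtinianRing_quotient : ∃ n, I.jacobson ^ n ≤ I := by
  obtain ⟨n, hn⟩ := IsArtinianRing.isNilpotent_jacobson_bot (R := R ⧸ I)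
  refine ⟨n, ?_⟩
  rwa [← map_quotient_self I, ← map_jacobson_of_surjective Quotient.mk_surjective (by simp),
    ← Ideal.map_pow, zero_eq_bot, map_eq_bot_iff_le_ker, mk_ker] at hn

end Ideal

variable {M : Type*} [AddCommGroup M] [Module R M]

instance isArtinianRing_quotient_ker_toSpanSingleton [IsArtinian R M] (x : M) :
    IsArtinianRing (R ⧸ ker (toSpanSingleton R M x)) :=
  have : IsArtinian R (R ⧸ ker (toSpanSingleton R M x)) :=
    isArtinian_of_linearEquiv (quotKerEquivRange _).symm
  isArtinian_of_tower R this

namespace Submodule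

theorem torsionBySet_ne_bot_iff_exists_injective {m : Ideal R} (hm : m.IsMaximal) :
    torsionBySet R M m ≠ ⊥ ↔ ∃ f : R ⧸ m →ₗ[R] M, Function.Injective f := by
  constructor
  · intro h
    obtain ⟨y, hy, hy0⟩ := (Submodule.ne_bot_iff _).mp h
    have hker : ker (toSpanSingleton R M y) = m := by
      refine (hm.eq_of_le (fun htop => hy0 ?_) fun r hr => ?_).symm
      · simpa using (ker (toSpanSingleton R M y)).eq_top_iff'.mp htop 1
      · exact (mem_torsionBySet_iff _ _).mp hy ⟨r, hr⟩
    subst hker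
    exact ⟨liftQ _ _ le_rfl, ker_eq_bot.mp (ker_liftQ_eq_bot' _ _ rfl)⟩
  · rintro ⟨f, hf⟩
    have : Nontrivial (R ⧸ m) := Ideal.Quotient.nontrivial_iff.mpr hm.ne_top
    refine (Submodule.ne_bot_iff _).mpr ⟨f 1, (mem_torsionBySet_iff _ _).mpr ?_, ?_⟩
    · rintro ⟨r, hr⟩
      rw [← map_smul, ← map_zero f]
      congr 1
      simpa [Algebra.smul_def, Ideal.Quotient.eq_zero_iff_mem] using hr
    · exact (map_ne_zero_iff f hf).mpr one_ne_zero

theorem torsionBySet_ne_bot_of_ker_toSpanSingleton_le [IsArtinian R M] (x : M) {p : Ideal R}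
    [p.IsPrime] (h : ker (toSpanSingleton R M x) ≤ p) : torsionBySet R M p ≠ ⊥ := by
  obtain ⟨b, hb, hpb⟩ := Ideal.exists_notMem_forall_mul_mem_of_isArtinianRing_quotient h
  refine (Submodule.ne_bot_iff _).mpr ⟨b • x, (mem_torsionBySet_iff _ _).mpr ?_, hb⟩
  rintro ⟨r, hr⟩
  rw [smul_smul]
  exact hpb r hr

theorem iSupIndep_torsionBySet_ideal {ι : Type*} {p : ι → Ideal R}
    (hp : Pairwise fun i j => p i ⊔ p j = ⊤) : iSupIndep fun i => torsionBySet R M (p i) :=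
  iSupIndep_iff_supIndep.mpr fun _ => supIndep_torsionBySet_ideal fun _ _ _ _ hij => hp hij

end Submodule

theorem IsArtinian.finite_setOf_isMaximal_torsionBySet_ne_bot [IsArtinian R M] :
    {m : Ideal R | m.IsMaximal ∧ torsionBySet R M m ≠ ⊥}.Finite := by
  have := WellFoundedLT.finite_of_iSupIndep (iSupIndep_torsionBySet_ideal (M := M)
    (p := fun m : {m : Ideal R | m.IsMaximal ∧ torsionBySet R M m ≠ ⊥} => (m : Ideal R))
    fun m n hmn => m.2.1.coprime_of_ne n.2.1 (Subtype.coe_ne_coe.mpr hmn)) fun m => m.2.2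
  exact Set.toFinite _

universe u v

/-- For an artinian module `M` over a commutative ring `R`, the set of maximal ideals `m`
with an embedding `R/m ↪ M` is finite, and every element of `M` is annihilated by some
power of the intersection `J` of these maximal ideals. -/
theorem artinian_module_finite_socle_maximals_and_power_annihilates
    {R : Type u} [CommRing R] (M : Type v) [AddCommGroup M] [Module R M]
    [IsArtinian R M] :
    {m : Ideal R | m.IsMaximal ∧ ∃ f : (R ⧸ m) →ₗ[R] M, Function.Injective f}.Finite ∧
    ∀ x : M, ∃ n : ℕ,
      ∀ a ∈ (sInf {m : Ideal R | m.IsMaximal ∧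
          ∃ f : (R ⧸ m) →ₗ[R] M, Function.Injective f}) ^ n, a • x = 0 := by
  refine ⟨(IsArtinian.finite_setOf_isMaximal_torsionBySet_ne_bot (M := M)).subset
    fun m ⟨hm, hf⟩ => ⟨hm, (torsionBySet_ne_bot_iff_exists_injective hm).mpr hf⟩, fun x => ?_⟩
  set I : Ideal R := ker (toSpanSingleton R M x)
  obtain ⟨n, hn⟩ := I.exists_jacobson_pow_le_of_isArtinianRing_quotient
  refine ⟨n, fun a ha => hn (Ideal.pow_right_mono ?_ n ha)⟩
  exact le_sInf fun m ⟨hIm, hm⟩ => sInf_le ⟨hm, (torsionBySet_ne_bot_iff_exists_injective hm).mp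
    (torsionBySet_ne_bot_of_ker_toSpanSingleton_le x hIm)⟩
end

section
/- Let (R_i)_{i ∈ ι} be a family of commutative topological rings and let A = ∏_{i ∈ ι} R_i be their product, equipped with the product ring structure and the product topology. Then every prime ideal P of A (so in particular P ≠ A) that is closed as a subset of A has the following form: there exist an index j ∈ ι and a prime ideal p of R_j such that P = {a ∈ A : a_j ∈ p}, i.e., P is the preimage of p under the j-th projection ring homomorphism A → R_j. -/
/-!
Every `c` in a product is the unconditional sum of its pieces `Pi.single i (c i)`, so a closed
ideal containing all of them contains `c`. For a closed prime `P` this forces some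
`Pi.single j 1 ∉ P` (otherwise `1 ∈ P`); since `Pi.single i x * Pi.single j 1 = 0` for `i ≠ j`,
primality puts every `Pi.single i x` with `i ≠ j` into `P`. Hence `P` contains the kernel of the
`j`-th projection, and is therefore the preimage of its image, a prime ideal of `R j`.
-/

universe u v

theorem Pi.hasSum_single {ι : Type*} {M : ι → Type*} [DecidableEq ι]
    [∀ i, AddCommMonoid (M i)] [∀ i, TopologicalSpace (M i)] (c : ∀ i, M i) :
    HasSum (fun i ↦ Pi.single i (c i)) c :=
  Pi.hasSum.mpr fun j ↦ by
    simpa using _root_.hasSum_single (f := fun i ↦ Pi.single i (c i) j) j fun i hij ↦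
      Pi.single_eq_of_ne' hij _

theorem IsClosed.mem_of_forall_single_mem {ι : Type*} {M : ι → Type*} [DecidableEq ι]
    [∀ i, AddCommMonoid (M i)] [∀ i, TopologicalSpace (M i)] {S : Type*}
    [SetLike S (∀ i, M i)] [AddSubmonoidClass S (∀ i, M i)] {s : S}
    (hs : IsClosed (s : Set (∀ i, M i))) {c : ∀ i, M i} (h : ∀ i, Pi.single i (c i) ∈ s) :
    c ∈ s :=
  hs.mem_of_tendsto (Pi.hasSum_single c) (.of_forall fun _ ↦ sum_mem fun i _ ↦ h i)

namespace Ideal.IsPrime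

variable {ι : Type*} {R : ι → Type*} [DecidableEq ι] [∀ i, Semiring (R i)]
  {P : Ideal (∀ i, R i)} [P.IsPrime]

theorem single_mem_of_ne {j : ι} (hj : Pi.single j 1 ∉ P) {i : ι} (hij : i ≠ j) (x : R i) :
    Pi.single i x ∈ P := by
  have hzero : Pi.single i x * Pi.single j (1 : R j) = 0 := by
    rw [← Pi.single_mul_right, Pi.single_eq_of_ne hij.symm, zero_mul, Pi.single_zero]
  exact (‹P.IsPrime›.mem_or_mem_of_mul_eq_zero hzero).resolve_right hj

variable [∀ i, TopologicalSpace (R i)] (hP : IsClosed (P : Set (∀ i, R i)))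
include hP

theorem exists_single_one_notMem : ∃ j, Pi.single j 1 ∉ P := by
  by_contra! h
  exact ‹P.IsPrime›.ne_top <| (eq_top_iff_one P).mpr <| hP.mem_of_forall_single_mem h

theorem ker_evalRingHom_le {j : ι} (hj : Pi.single j 1 ∉ P) :
    RingHom.ker (Pi.evalRingHom R j) ≤ P := by
  intro c (hc : c j = 0)
  refine hP.mem_of_forall_single_mem fun i ↦ ?_
  obtain rfl | hij := eq_or_ne i j
  · rw [hc, Pi.single_zero]
    exact P.zero_mem
  · exact single_mem_of_ne hj hij _

end Ideal.IsPrime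

theorem Ideal.eq_comap_map_of_ker_le {R S F : Type*} [Ring R] [Ring S] [FunLike F R S]
    [RingHomClass F R S] {f : F} (hf : Function.Surjective f) {I : Ideal R}
    (h : RingHom.ker f ≤ I) : I = (I.map f).comap f := by
  rw [comap_map_of_surjective' f hf, sup_eq_left.mpr h]

theorem closed_prime_ideal_of_product_is_pullback_general
    {ι : Type u} (R : ι → Type v) [∀ i, CommRing (R i)]
    [∀ i, TopologicalSpace (R i)]
    (P : Ideal (∀ i, R i)) [P.IsPrime] (hP : IsClosed (P : Set (∀ i, R i))) :
    ∃ (j : ι) (p : Ideal (R j)), p.IsPrime ∧ P = p.comap (Pi.evalRingHom R j) := by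
  classical
  obtain ⟨j, hj⟩ := Ideal.IsPrime.exists_single_one_notMem hP
  have hker := Ideal.IsPrime.ker_evalRingHom_le hP hj
  have hsurj : Function.Surjective (Pi.evalRingHom R j) := Function.surjective_eval j
  exact ⟨j, P.map (Pi.evalRingHom R j), Ideal.map_isPrime_of_surjective hsurj hker,
    Ideal.eq_comap_map_of_ker_le hsurj hker⟩

/-- Every closed prime ideal of a product of commutative topological rings is the
preimage of a prime ideal of one of the factors under the corresponding projection. -/
theorem closed_prime_ideal_of_product_is_pullback
    {ι : Type u} (R : ι → Type v) [∀ i, CommRing (R i)]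
    [∀ i, TopologicalSpace (R i)] [∀ i, IsTopologicalRing (R i)]
    (P : Ideal (∀ i, R i)) [P.IsPrime] (hP : IsClosed (P : Set (∀ i, R i))) :
    ∃ (j : ι) (p : Ideal (R j)), p.IsPrime ∧ P = p.comap (Pi.evalRingHom R j) :=
  closed_prime_ideal_of_product_is_pullback_general R P hP
end

section
/- Let R be a commutative topological ring and M an artinian R-module such that every element of M is annihilated by some open ideal of R, i.e., for each x ∈ M there exists an ideal I of R that is an open subset of R and satisfies a·x = 0 for all a ∈ I. Then the radical √(Ann_R(M)) of the annihilator Ann_R(M) = {a ∈ R : a·x = 0 for all x ∈ M} is a closed subset of R. -/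
/-!
Let `J = √(Ann M)`. Since `M` is artinian, the chain `J ^ n • M` stabilises at some `W` with
`J • W = W`, and a Nakayama-type argument gives `W = 0`, so `J ^ k` kills `M` for some `k`.
If `c` lies in the closure of `J` and `x ∈ M` is killed by the open ideal `U`, then `J + U` is
open, hence closed, so `c = r + u` with `r ∈ J`, `u ∈ U`, and `c • x = r • x`. Iterating,
`c ^ k • x ∈ J ^ k • M = 0`, so `c ∈ J`.
-/

universe u v

open Submodule

section Annihilator

variable {R : Type*} [CommRing R] {M : Type*} [AddCommGroup M] [Module R M]

theorem Submodule.pow_smul_eq_self {I : Ideal R} {N : Submodule R M} (h : I • N = N) (n : ℕ) :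
    I ^ n • N = N := by
  induction n with
  | zero => rw [pow_zero, Ideal.one_eq_top, top_smul]
  | succ n ih => rw [pow_succ, mul_smul, h, ih]

theorem Submodule.smul_eq_bot_of_le_annihilator {I : Ideal R} (hI : I ≤ Module.annihilator R M)
    (N : Submodule R M) : I • N = ⊥ :=
  eq_bot_iff.mpr <| calc
    I • N ≤ (⊤ : Submodule R M).annihilator • ⊤ :=
      smul_mono (by rwa [annihilator_top]) le_top
    _ = ⊥ := annihilator_smul _

theorem Submodule.eq_bot_of_span_singleton_smul_eq_self {b : R}
    (hb : b ∈ (Module.annihilator R M).radical) {N : Submodule R M}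
    (h : Ideal.span {b} • N = N) : N = ⊥ := by
  obtain ⟨m, hm⟩ := hb
  rw [← pow_smul_eq_self h m, Ideal.span_singleton_pow]
  exact smul_eq_bot_of_le_annihilator (Ideal.span_singleton_le_iff_mem _ |>.mpr hm) N

/- A minimal `N ≠ ⊥` with `J • N = N` has `b • N` equal to `N` or `⊥` for every `b ∈ J`,
and the first case is excluded by nilpotence of `b` on `M`. -/
theorem Submodule.eq_bot_of_smul_eq_self_of_le_radical_annihilator [IsArtinian R M]
    {J : Ideal R} (hJ : J ≤ (Module.annihilator R M).radical) {W : Submodule R M}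
    (hW : J • W = W) : W = ⊥ := by
  by_contra hW0
  obtain ⟨N, ⟨hN0, hN⟩, hmin⟩ :=
    IsArtinian.set_has_minimal {N : Submodule R M | N ≠ ⊥ ∧ J • N = N} ⟨W, hW0, hW⟩
  have hkill : ∀ b ∈ J, Ideal.span {b} • N = ⊥ := by
    intro b hb
    by_contra hbN
    have hJbN : J • (Ideal.span {b} • N) = Ideal.span {b} • N := by
      rw [← mul_smul, mul_comm, mul_smul, hN]
    have hbN_eq : Ideal.span {b} • N = N :=
      smul_le_right.eq_of_not_lt (hmin _ ⟨hbN, hJbN⟩)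
    exact hN0 (eq_bot_of_span_singleton_smul_eq_self (hJ hb) hbN_eq)
  refine hN0 (eq_bot_iff.mpr (hN ▸ smul_le.mpr fun b hb v hv => ?_))
  simpa [hkill b hb] using smul_mem_smul (Ideal.mem_span_singleton_self b) hv

theorem Submodule.exists_pow_smul_top_eq_bot [IsArtinian R M] {J : Ideal R}
    (hJ : J ≤ (Module.annihilator R M).radical) :
    ∃ k : ℕ, J ^ k • (⊤ : Submodule R M) = ⊥ := by
  obtain ⟨_, ⟨k, rfl⟩, hmin⟩ :=
    IsArtinian.set_has_minimal (Set.range fun n : ℕ => J ^ n • (⊤ : Submodule R M))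
      (Set.range_nonempty _)
  refine ⟨k, eq_bot_of_smul_eq_self_of_le_radical_annihilator hJ
    (smul_le_right.eq_of_not_lt (hmin _ ⟨k + 1, ?_⟩))⟩
  simp only [pow_succ', mul_smul]

theorem pow_smul_mem_pow_smul_top {I : Ideal R} {c : R}
    (hc : ∀ x : M, ∃ r ∈ I, c • x = r • x) (n : ℕ) (x : M) :
    c ^ n • x ∈ I ^ n • (⊤ : Submodule R M) := by
  induction n with
  | zero => simp
  | succ n ih =>
    obtain ⟨r, hr, hrx⟩ := hc (c ^ n • x)
    rw [pow_succ' c, mul_smul, hrx, pow_succ' I, mul_smul]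
    exact smul_mem_smul hr ih

end Annihilator

section Topology

variable {R : Type*} [CommRing R] [TopologicalSpace R] [IsTopologicalRing R]

theorem Ideal.closure_subset_sup_of_isOpen (I : Ideal R) {U : Ideal R}
    (hU : IsOpen (U : Set R)) :
    closure (I : Set R) ⊆ (I ⊔ U : Ideal R) :=
  closure_minimal (le_sup_left : I ≤ I ⊔ U) <|
    AddSubgroup.isClosed_of_isOpen (I ⊔ U).toAddSubgroup <|
      Ideal.isOpen_of_isOpen_subideal le_sup_right hU

theorem exists_mem_smul_eq_of_mem_closure {M : Type*} [AddCommGroup M] [Module R M]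
    {I U : Ideal R} (hU : IsOpen (U : Set R)) {x : M} (hUx : ∀ a ∈ U, a • x = 0) {c : R}
    (hc : c ∈ closure (I : Set R)) : ∃ r ∈ I, c • x = r • x := by
  obtain ⟨r, hr, u, hu, rfl⟩ := Submodule.mem_sup.mp (I.closure_subset_sup_of_isOpen hU hc)
  exact ⟨r, hr, by rw [add_smul, hUx u hu, add_zero]⟩

end Topology

/-- If every element of an artinian `R`-module `M` is annihilated by some open ideal of
the commutative topological ring `R`, then the radical of the annihilator of `M` is
closed in `R`. -/
theorem isClosed_radical_annihilator_of_open_ideal_torsion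
    {R : Type u} [CommRing R] [TopologicalSpace R] [IsTopologicalRing R]
    (M : Type v) [AddCommGroup M] [Module R M] [IsArtinian R M]
    (h : ∀ x : M, ∃ I : Ideal R, IsOpen (I : Set R) ∧ ∀ a ∈ I, a • x = 0) :
    IsClosed (((Module.annihilator R M : Ideal R).radical : Ideal R) : Set R) := by
  set J := (Module.annihilator R M).radical
  obtain ⟨k, hk⟩ := exists_pow_smul_top_eq_bot (le_refl J)
  refine isClosed_of_closure_subset fun c hc => ⟨k, Module.mem_annihilator.mpr fun x => ?_⟩
  have hcJ : ∀ y : M, ∃ r ∈ J, c • y = r • y := fun y =>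
    let ⟨_, hU, hUy⟩ := h y
    exists_mem_smul_eq_of_mem_closure hU hUy hc
  simpa [hk] using pow_smul_mem_pow_smul_top hcJ k x
end

section
/- Let R be a commutative noetherian ring and M an artinian R-module, and let m_1, …, m_s be the (finitely many, all maximal) associated primes of M. For an ideal I of R let Γ_I(M) denote the submodule {x ∈ M : I^n · x = 0 for some n ∈ ℕ} of M. Then M is the internal direct sum of the submodules Γ_{m_1}(M), …, Γ_{m_s}(M); that is, these submodules are independent and their sum is all of M. -/
universe u v

/-- `Γ_I(M)`: the submodule of elements of `M` annihilated by some power of `I`. -/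
def powerTorsion {R : Type u} [CommRing R] (M : Type v) [AddCommGroup M] [Module R M]
    (I : Ideal R) : Submodule R M where
  carrier := {x | ∃ n : ℕ, ∀ a ∈ I ^ n, a • x = 0}
  zero_mem' := ⟨0, fun a _ => smul_zero a⟩
  add_mem' := by
    rintro x y ⟨n, hn⟩ ⟨m, hm⟩
    refine ⟨max n m, fun a ha => ?_⟩
    rw [smul_add, hn a (Ideal.pow_le_pow_right (le_max_left n m) ha),
      hm a (Ideal.pow_le_pow_right (le_max_right n m) ha), add_zero]
  smul_mem' := by
    rintro c x ⟨n, hn⟩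
    exact ⟨n, fun a ha => by rw [smul_comm a c x, hn a ha, smul_zero]⟩

/-!
Distinct maximal ideals are comaximal, so the `Γ_m(M)` are independent: finitely many elements
of them are killed by one common power of each `m`, where the Chinese remainder splitting of
`torsionBySet` applies. For the sum, `R ⧸ ann x ≅ R ∙ x` is an artinian ring, so `ann x` contains
`⨅ mᵢ ^ n` for the finitely many maximal ideals `mᵢ ⊇ ann x`, and `x` splits into pieces killed
by the `mᵢ ^ n`. A nonzero piece lies in an associated prime `P ⊇ mᵢ ^ n`, whence `P = mᵢ`.
Artinianity of `R ⧸ ann x` also makes every associated prime maximal.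
-/

section

variable {R : Type u} [CommRing R] {M : Type v} [AddCommGroup M] [Module R M]

open Submodule

theorem mem_powerTorsion_iff {I : Ideal R} {x : M} :
    x ∈ powerTorsion M I ↔ ∃ n : ℕ, x ∈ torsionBySet R M ↑(I ^ n) := by
  simp only [mem_torsionBySet_iff, Subtype.forall]
  rfl

theorem iSupIndep_powerTorsion {ι : Type*} {I : ι → Ideal R}
    (hI : Pairwise fun i j => IsCoprime (I i) (I j)) :
    iSupIndep fun i => powerTorsion M (I i) := by
  rw [iSupIndep_iff_finsetSum_eq_zero_imp_eq_zero]
  intro s v hv hsum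
  simp only [mem_powerTorsion_iff] at hv
  choose! e he using hv
  have hindep : iSupIndep fun i => torsionBySet R M ↑(I i ^ s.sup e) :=
    iSupIndep_iff_supIndep.mpr fun _ =>
      supIndep_torsionBySet_ideal fun i _ j _ hij => ((hI hij).pow).sup_eq
  refine (iSupIndep_iff_finsetSum_eq_zero_imp_eq_zero _).mp hindep s v (fun i hi => ?_) hsum
  exact torsionBySet_le_torsionBySet_pow _ _ (Finset.le_sup hi) _ (he i hi)

theorem Ideal.IsPrime.isMaximal_of_isArtinianRing_quotient {I p : Ideal R}
    [IsArtinianRing (R ⧸ I)] (hp : p.IsPrime) (hIp : I ≤ p) : p.IsMaximal := by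
  have hker : RingHom.ker (Ideal.Quotient.mk I) ≤ p := by rwa [Ideal.mk_ker]
  have : (p.map (Ideal.Quotient.mk I)).IsPrime :=
    Ideal.map_isPrime_of_surjective Ideal.Quotient.mk_surjective hker
  have hmax := Ideal.comap_isMaximal_of_surjective _ Ideal.Quotient.mk_surjective
    (K := p.map (Ideal.Quotient.mk I))
  rwa [Ideal.comap_map_of_surjective' _ Ideal.Quotient.mk_surjective, sup_eq_left.mpr hker]
    at hmax

theorem Ideal.exists_finset_isMaximal_iInf_pow_le (I : Ideal R) [IsArtinianRing (R ⧸ I)] :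
    ∃ (S : Finset (Ideal R)) (n : ℕ), (∀ m ∈ S, m.IsMaximal) ∧ ⨅ m ∈ S, m ^ n ≤ I := by
  classical
  have := Fintype.ofFinite (MaximalSpectrum (R ⧸ I))
  obtain ⟨n, hn⟩ := IsArtinianRing.isNilpotent_nilradical (R := R ⧸ I)
  rw [IsArtinianRing.nilradical_pow_eq_iInf] at hn
  refine ⟨Finset.univ.image fun m : MaximalSpectrum (R ⧸ I) =>
    m.asIdeal.comap (Ideal.Quotient.mk I), n, ?_, ?_⟩
  · simp only [Finset.mem_image, Finset.mem_univ, true_and, forall_exists_index]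
    rintro _ m rfl
    exact Ideal.comap_isMaximal_of_surjective _ Ideal.Quotient.mk_surjective
  · intro a ha
    have hmem : Ideal.Quotient.mk I a ∈ ⨅ m : MaximalSpectrum (R ⧸ I), m.asIdeal ^ n :=
      Ideal.mem_iInf.mpr fun m => Ideal.le_comap_pow _ n <|
        Ideal.mem_iInf.mp (Ideal.mem_iInf.mp ha _) (Finset.mem_image_of_mem _ (Finset.mem_univ m))
    rw [hn, Ideal.zero_eq_bot, Ideal.mem_bot] at hmem
    exact Ideal.Quotient.eq_zero_iff_mem.mp hmem

variable (R) in
theorem isArtinianRing_quotient_torsionOf [IsArtinian R M] (x : M) :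
    IsArtinianRing (R ⧸ Ideal.torsionOf R M x) :=
  isArtinian_of_tower R <|
    isArtinian_of_linearEquiv (Ideal.quotTorsionOfEquivSpanSingleton R M x).symm

theorem IsAssociatedPrime.isMaximal_of_isArtinian [IsArtinian R M] {p : Ideal R}
    (h : IsAssociatedPrime p M) : p.IsMaximal := by
  obtain ⟨hp, x, rfl⟩ := h
  have := isArtinianRing_quotient_torsionOf R x
  refine hp.isMaximal_of_isArtinianRing_quotient (I := Ideal.torsionOf R M x)
    (le_trans ?_ Ideal.le_radical)
  intro a ha
  simpa [mem_colon_singleton, Ideal.mem_torsionOf_iff] using ha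

theorem powerTorsion_le_iSup_associatedPrimes [IsNoetherianRing R] {m : Ideal R}
    (hm : m.IsMaximal) : powerTorsion M m ≤ ⨆ p : associatedPrimes R M, powerTorsion M p.1 := by
  intro x hx
  obtain rfl | hx0 := eq_or_ne x 0
  · exact zero_mem _
  obtain ⟨P, hP, hxP⟩ := exists_le_isAssociatedPrime_of_isNoetherianRing R x hx0
  obtain ⟨n, hn⟩ := hx
  have hmP : m = P := hm.eq_of_le hP.isPrime.ne_top <| hP.isPrime.le_of_pow_le <|
    fun a ha => hxP <| by simpa [mem_colon_singleton] using hn a ha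
  subst hmP
  exact mem_iSup_of_mem ⟨m, hP⟩ ⟨n, hn⟩

theorem iSup_powerTorsion_associatedPrimes_eq_top [IsNoetherianRing R] [IsArtinian R M] :
    ⨆ p : associatedPrimes R M, powerTorsion M p.1 = ⊤ := by
  refine eq_top_iff'.mpr fun x => ?_
  have := isArtinianRing_quotient_torsionOf R x
  obtain ⟨S, n, hS, hle⟩ := (Ideal.torsionOf R M x).exists_finset_isMaximal_iInf_pow_le
  have hx : x ∈ torsionBySet R M ↑(⨅ m ∈ S, m ^ n) := by
    rw [mem_torsionBySet_iff]
    exact fun ⟨a, ha⟩ => (Ideal.mem_torsionOf_iff x a).mp (hle ha)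
  rw [← iSup_torsionBySet_ideal_eq_torsionBySet_iInf fun m hm m' hm' hne =>
    Ideal.pow_sup_pow_eq_top ((hS m hm).coprime_of_ne (hS m' hm') hne)] at hx
  refine SetLike.le_def.mp (iSup₂_le fun m hm => ?_) hx
  exact le_trans (fun y hy => mem_powerTorsion_iff.mpr ⟨n, hy⟩)
    (powerTorsion_le_iSup_associatedPrimes (hS m hm))

end

/-- An artinian module over a commutative noetherian ring is the internal direct sum of
the submodules `Γ_m(M)`, where `m` ranges over the associated primes of `M`. -/
theorem artinian_module_internal_direct_sum_of_powerTorsion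
    {R : Type u} [CommRing R] [IsNoetherianRing R]
    (M : Type v) [AddCommGroup M] [Module R M] [IsArtinian R M] :
    iSupIndep (fun p : associatedPrimes R M => powerTorsion M p.1) ∧
    (⨆ p : associatedPrimes R M, powerTorsion M p.1) = ⊤ :=
  ⟨iSupIndep_powerTorsion fun p q hpq => Ideal.isCoprime_iff_sup_eq.mpr <|
      p.2.isMaximal_of_isArtinian.coprime_of_ne q.2.isMaximal_of_isArtinian
        (Subtype.coe_injective.ne hpq),
    iSup_powerTorsion_associatedPrimes_eq_top⟩
end
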